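/- Let the dataset be linearly separable and symmetric (each (x,y) appears together with (−x,−y)), with max-margin linear separator w* ∈ S^{d-1}. Then for a two-layer Leaky ReLU network of width m ≥ 2, any unit-norm global maximizer θ* of the normalized margin γ(θ) = min_i y_i f_θ(x_i) / ‖θ‖² represents a linear function: f_{θ*}(x) = ((1+α)/4)⟨w*, x⟩ for all x ∈ ℝ^d. -/

import Mathlib

/-!
Write `u = ∑ₖ aₖ wₖ` and `γ*` for the margin of `w*`. The odd part of a Leaky ReLU unit is
linear, `φ t - φ (-t) = (1 + α) t`, so pairing each data point with its mirror image bounds the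
network's margin by `(1 + α) / 2` times the linear margin of `u`, hence by `(1 + α) / 2 ‖u‖ γ*`;
AM–GM gives `‖u‖ ≤ 1 / 2`. The two-neuron network
`½ φ ⟪½ w*, x⟫ - ½ φ ⟪-½ w*, x⟫ = (1 + α) / 4 ⟪w*, x⟫` attains the resulting bound
`(1 + α) / 4 γ*`, so every inequality is an equality: `2 u = w*` by uniqueness of the max-margin
direction, equality in AM–GM forces `wₖ = aₖ w*`, and evaluating the network at a support vector
and at its mirror image forces the neurons with positive and with negative output weight to
carry the same mass `1 / 4`.
-/

open Finset RealInnerProductSpace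

def leakyRelu (α z : ℝ) : ℝ := max z (α * z)

section LeakyRelu

variable {α : ℝ}

lemma leakyRelu_of_nonneg (hα : α ≤ 1) {z : ℝ} (hz : 0 ≤ z) : leakyRelu α z = z :=
  max_eq_left (by nlinarith)

lemma leakyRelu_of_nonpos (hα : α ≤ 1) {z : ℝ} (hz : z ≤ 0) : leakyRelu α z = α * z :=
  max_eq_right (by nlinarith)

lemma leakyRelu_mul_of_nonneg {c : ℝ} (hc : 0 ≤ c) (z : ℝ) :
    leakyRelu α (c * z) = c * leakyRelu α z := by
  rw [leakyRelu, leakyRelu, mul_max_of_nonneg _ _ hc, mul_left_comm]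

lemma leakyRelu_sub_leakyRelu_neg (hα : α ≤ 1) (z : ℝ) :
    leakyRelu α z - leakyRelu α (-z) = (1 + α) * z := by
  rcases le_total 0 z with hz | hz
  · rw [leakyRelu_of_nonneg hα hz, leakyRelu_of_nonpos hα (neg_nonpos.2 hz)]; ring
  · rw [leakyRelu_of_nonpos hα hz, leakyRelu_of_nonneg hα (neg_nonneg.2 hz)]; ring

lemma mul_leakyRelu_mul (a t : ℝ) :
    a * leakyRelu α (a * t) =
      max a 0 ^ 2 * leakyRelu α t - min a 0 ^ 2 * leakyRelu α (-t) := by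
  rcases le_total 0 a with ha | ha
  · rw [max_eq_left ha, min_eq_right ha, leakyRelu_mul_of_nonneg ha]; ring
  · rw [max_eq_right ha, min_eq_left ha, show a * t = -a * -t by ring,
      leakyRelu_mul_of_nonneg (neg_nonneg.2 ha)]
    ring

end LeakyRelu

section TwoLayerNet

variable {E κ : Type*} [NormedAddCommGroup E] [InnerProductSpace ℝ E] [Fintype κ] {α : ℝ}

def twoLayerNet (α : ℝ) (a : κ → ℝ) (w : κ → E) (z : E) : ℝ :=
  ∑ k, a k * leakyRelu α ⟪w k, z⟫

lemma twoLayerNet_sub_twoLayerNet_neg (hα : α ≤ 1) (a : κ → ℝ) (w : κ → E) (z : E) :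
    twoLayerNet α a w z - twoLayerNet α a w (-z) = (1 + α) * ⟪∑ k, a k • w k, z⟫ := by
  simp_rw [twoLayerNet, ← sum_sub_distrib, sum_inner, mul_sum, inner_neg_right, ← mul_sub,
    leakyRelu_sub_leakyRelu_neg hα, real_inner_smul_left, mul_left_comm]

lemma twoLayerNet_smul_right (a : κ → ℝ) (e z : E) :
    twoLayerNet α a (fun k => a k • e) z =
      (∑ k, max (a k) 0 ^ 2) * leakyRelu α ⟪e, z⟫ -
        (∑ k, min (a k) 0 ^ 2) * leakyRelu α (-⟪e, z⟫) := by
  simp_rw [twoLayerNet, real_inner_smul_left, mul_leakyRelu_mul, sum_sub_distrib, sum_mul]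

def IsBalanced (a : κ → ℝ) : Prop :=
  ∑ k, max (a k) 0 ^ 2 = 1 / 4 ∧ ∑ k, min (a k) 0 ^ 2 = 1 / 4

lemma IsBalanced.twoLayerNet_smul_right {a : κ → ℝ} (ha : IsBalanced a) (hα : α ≤ 1) (e z : E) :
    twoLayerNet α a (fun k => a k • e) z = (1 + α) / 4 * ⟪e, z⟫ := by
  rw [_root_.twoLayerNet_smul_right, ha.1, ha.2, ← mul_sub, leakyRelu_sub_leakyRelu_neg hα]
  ring

lemma sum_max_zero_sq_add_sum_min_zero_sq (a : κ → ℝ) :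
    ∑ k, max (a k) 0 ^ 2 + ∑ k, min (a k) 0 ^ 2 = ∑ k, a k ^ 2 := by
  rw [← sum_add_distrib]
  refine sum_congr rfl fun k _ => ?_
  rcases le_total 0 (a k) with ha | ha <;> simp [ha]

lemma exists_isBalanced [Nontrivial κ] : ∃ a : κ → ℝ, IsBalanced a := by
  classical
  obtain ⟨k₀, k₁, hk⟩ := exists_pair_ne κ
  refine ⟨fun k => if k = k₀ then 1 / 2 else if k = k₁ then -1 / 2 else 0, ?_, ?_⟩
  · rw [sum_eq_single k₀ (fun k _ hk₀ => by simp only [if_neg hk₀]; split_ifs <;> norm_num)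
      (by simp)]
    norm_num
  · rw [sum_eq_single k₁ (fun k _ hk₁ => by simp only [if_neg hk₁]; split_ifs <;> norm_num)
      (by simp)]
    norm_num [hk.symm]

lemma exists_twoLayerNet_eq_inner [Nontrivial κ] (hα : α ≤ 1) {e : E} (he : ‖e‖ = 1) :
    ∃ (w : κ → E) (a : κ → ℝ), ∑ k, ‖w k‖ ^ 2 + ∑ k, a k ^ 2 = 1 ∧
      twoLayerNet α a w = fun z => (1 + α) / 4 * ⟪e, z⟫ := by
  obtain ⟨a, ha⟩ := exists_isBalanced (κ := κ)
  refine ⟨fun k => a k • e, a, ?_, funext (ha.twoLayerNet_smul_right hα e)⟩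
  simp_rw [norm_smul, he, mul_one, Real.norm_eq_abs, sq_abs]
  rw [← sum_max_zero_sq_add_sum_min_zero_sq, ha.1, ha.2]
  norm_num

lemma norm_sum_smul_le (a : κ → ℝ) (w : κ → E) :
    ‖∑ k, a k • w k‖ ≤ (∑ k, ‖w k‖ ^ 2 + ∑ k, a k ^ 2) / 2 :=
  calc ‖∑ k, a k • w k‖ ≤ ∑ k, ‖a k • w k‖ := norm_sum_le _ _
    _ ≤ ∑ k, (‖w k‖ ^ 2 + a k ^ 2) / 2 := sum_le_sum fun k _ => by
        rw [norm_smul, Real.norm_eq_abs]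
        nlinarith [sq_abs (a k), sq_nonneg (|a k| - ‖w k‖)]
    _ = (∑ k, ‖w k‖ ^ 2 + ∑ k, a k ^ 2) / 2 := by rw [← sum_div, sum_add_distrib]

lemma sum_norm_sub_smul_sq {e : E} (he : ‖e‖ = 1) (a : κ → ℝ) (w : κ → E) :
    ∑ k, ‖w k - a k • e‖ ^ 2 = ∑ k, ‖w k‖ ^ 2 + ∑ k, a k ^ 2 - 2 * ⟪∑ k, a k • w k, e⟫ := by
  rw [sum_inner, mul_sum, ← sum_add_distrib, ← sum_sub_distrib]
  refine sum_congr rfl fun k _ => ?_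
  rw [norm_sub_sq_real, norm_smul, real_inner_smul_right, real_inner_smul_left, he,
    Real.norm_eq_abs]
  nlinarith [sq_abs (a k)]

lemma eq_smul_of_two_mul_inner_sum_smul_eq {e : E} (he : ‖e‖ = 1) {a : κ → ℝ} {w : κ → E}
    (h : 2 * ⟪∑ k, a k • w k, e⟫ = ∑ k, ‖w k‖ ^ 2 + ∑ k, a k ^ 2) (k : κ) : w k = a k • e := by
  have h0 : ∑ k, ‖w k - a k • e‖ ^ 2 = 0 := by rw [sum_norm_sub_smul_sq he]; linarith
  rw [sum_eq_zero_iff_of_nonneg fun _ _ => sq_nonneg _] at h0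
  simpa [sub_eq_zero] using h0 k (mem_univ k)

end TwoLayerNet

section Margin

variable {ι E : Type*} [Fintype ι] [Nonempty ι]

def margin (x : ι → E) (y : ι → ℝ) (g : E → ℝ) : ℝ :=
  univ.inf' univ_nonempty fun i => y i * g (x i)

variable {x : ι → E} {y : ι → ℝ} {g : E → ℝ}

lemma le_margin_iff {c : ℝ} : c ≤ margin x y g ↔ ∀ i, c ≤ y i * g (x i) := by
  simp [margin]

lemma margin_le (i : ι) : margin x y g ≤ y i * g (x i) :=
  inf'_le _ (mem_univ i)

lemma exists_margin_eq (x : ι → E) (y : ι → ℝ) (g : E → ℝ) :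
    ∃ i, margin x y g = y i * g (x i) := by
  obtain ⟨i, -, h⟩ := exists_mem_eq_inf' univ_nonempty fun i => y i * g (x i)
  exact ⟨i, h⟩

lemma margin_const_mul {c : ℝ} (hc : 0 ≤ c) :
    margin x y (fun z => c * g z) = c * margin x y g := by
  rw [margin, margin, apply_inf'_eq_inf'_comp univ_nonempty (c * ·)
    fun _ _ => mul_min_of_nonneg _ _ hc]
  simp only [Function.comp_def, mul_left_comm]

end Margin

section LinearMargin

variable {ι E : Type*} [Fintype ι] [Nonempty ι] [NormedAddCommGroup E] [InnerProductSpace ℝ E]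
  {x : ι → E} {y : ι → ℝ}

lemma margin_inner_smul {c : ℝ} (hc : 0 ≤ c) (v : E) :
    margin x y (inner ℝ (c • v)) = c * margin x y (inner ℝ v) := by
  rw [← margin_const_mul hc]
  exact congrArg _ (funext fun z => real_inner_smul_left v z c)

lemma margin_inner_zero : margin x y (inner ℝ (0 : E)) = 0 := by
  simpa using margin_inner_smul (x := x) (y := y) le_rfl (0 : E)

lemma margin_inner_add_le (v w : E) :
    margin x y (inner ℝ v) + margin x y (inner ℝ w) ≤ margin x y (inner ℝ (v + w)) :=
  le_margin_iff.2 fun i => by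
    rw [inner_add_left, mul_add]
    exact add_le_add (margin_le i) (margin_le i)

def IsMaxMargin (x : ι → E) (y : ι → ℝ) (w : E) : Prop :=
  ‖w‖ = 1 ∧ ∀ v : E, ‖v‖ = 1 → margin x y (inner ℝ v) ≤ margin x y (inner ℝ w)

namespace IsMaxMargin

variable {w : E}

lemma margin_le_norm_mul (hw : IsMaxMargin x y w) (v : E) :
    margin x y (inner ℝ v) ≤ ‖v‖ * margin x y (inner ℝ w) := by
  rcases eq_or_ne v 0 with rfl | hv
  · rw [margin_inner_zero, norm_zero, zero_mul]
  calc margin x y (inner ℝ v) = ‖v‖ * margin x y (inner ℝ (‖v‖⁻¹ • v)) := by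
        rw [margin_inner_smul (by positivity), ← mul_assoc,
          mul_inv_cancel₀ (norm_ne_zero_iff.2 hv), one_mul]
    _ ≤ ‖v‖ * margin x y (inner ℝ w) :=
        mul_le_mul_of_nonneg_left (hw.2 _ (norm_smul_inv_norm hv)) (norm_nonneg v)

lemma margin_pos (hw : IsMaxMargin x y w) (hsep : ∃ v : E, ∀ i, 1 ≤ y i * ⟪v, x i⟫) :
    0 < margin x y (inner ℝ w) := by
  obtain ⟨v, hv⟩ := hsep
  have hv1 : 1 ≤ margin x y (inner ℝ v) := le_margin_iff.2 hv
  have hv0 : v ≠ 0 := by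
    rintro rfl
    rw [margin_inner_zero] at hv1
    linarith
  calc 0 < ‖v‖⁻¹ * margin x y (inner ℝ v) := by
        have := norm_pos_iff.2 hv0
        positivity
    _ = margin x y (inner ℝ (‖v‖⁻¹ • v)) := (margin_inner_smul (by positivity) v).symm
    _ ≤ margin x y (inner ℝ w) := hw.2 _ (norm_smul_inv_norm hv0)

-- If `v ≠ w`, then `‖v + w‖ < 2` while `v + w` has margin at least twice that of `w`.
lemma eq_of_margin_le (hw : IsMaxMargin x y w) (hpos : 0 < margin x y (inner ℝ w)) {v : E}
    (hv : ‖v‖ ≤ 1) (h : margin x y (inner ℝ w) ≤ margin x y (inner ℝ v)) : v = w := by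
  by_contra hne
  have hsub : 0 < ‖v - w‖ := norm_pos_iff.2 (sub_ne_zero.2 hne)
  have hadd : ‖v + w‖ < 2 := by
    have := parallelogram_law_with_norm ℝ v w
    nlinarith [norm_nonneg v, norm_nonneg (v + w), hw.1]
  have := margin_inner_add_le (x := x) (y := y) v w
  nlinarith [hw.margin_le_norm_mul (v + w)]

end IsMaxMargin

end LinearMargin

def IsSymmetricDataset {ι E : Type*} [Neg E] (x : ι → E) (y : ι → ℝ) : Prop :=
  ∀ i, ∃ j, x j = -x i ∧ y j = -y i

namespace IsSymmetricDataset

variable {ι E : Type*} [Fintype ι] [Nonempty ι] {y : ι → ℝ}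

lemma two_mul_margin_le [Neg E] {x : ι → E} (hs : IsSymmetricDataset x y) (g : E → ℝ) (i : ι) :
    2 * margin x y g ≤ y i * (g (x i) - g (-x i)) := by
  obtain ⟨j, hxj, hyj⟩ := hs i
  have hi : margin x y g ≤ y i * g (x i) := margin_le i
  have hj : margin x y g ≤ y j * g (x j) := margin_le j
  rw [hxj, hyj] at hj
  linarith

variable [NormedAddCommGroup E] [InnerProductSpace ℝ E] {x : ι → E}

lemma two_mul_margin_twoLayerNet_le {κ : Type*} [Fintype κ] (hs : IsSymmetricDataset x y)
    {α : ℝ} (hα : -1 < α) (hα1 : α ≤ 1) (a : κ → ℝ) (w : κ → E) :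
    2 * margin x y (twoLayerNet α a w) ≤ (1 + α) * margin x y (inner ℝ (∑ k, a k • w k)) := by
  rw [← margin_const_mul (c := 1 + α) (by linarith), le_margin_iff]
  intro i
  rw [← twoLayerNet_sub_twoLayerNet_neg hα1]
  exact hs.two_mul_margin_le _ i

lemma exists_inner_eq_margin (hs : IsSymmetricDataset x y) (hy : ∀ i, y i = 1 ∨ y i = -1)
    (v : E) (g : E → ℝ) :
    ∃ z, ⟪v, z⟫ = margin x y (inner ℝ v) ∧ margin x y g ≤ g z ∧ margin x y g ≤ -g (-z) := by
  obtain ⟨i, hi⟩ := exists_margin_eq x y (inner ℝ v)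
  obtain ⟨j, hxj, hyj⟩ := hs i
  have hgi : margin x y g ≤ y i * g (x i) := margin_le i
  have hgj : margin x y g ≤ y j * g (x j) := margin_le j
  rw [hxj, hyj] at hgj
  rcases hy i with h | h <;> rw [h] at hi hgi hgj
  · exact ⟨x i, by simpa using hi.symm, by simpa using hgi, by simpa using hgj⟩
  · exact ⟨-x i, by simp [hi], by simpa using hgj, by simpa using hgi⟩

lemma isBalanced_of_le_margin {κ : Type*} [Fintype κ] (hs : IsSymmetricDataset x y)
    (hy : ∀ i, y i = 1 ∨ y i = -1) {α : ℝ} (hα1 : α < 1) {e : E}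
    (hγ : 0 < margin x y (inner ℝ e)) {a : κ → ℝ} (hsq : ∑ k, a k ^ 2 = 1 / 2)
    (hM : (1 + α) / 4 * margin x y (inner ℝ e) ≤ margin x y (twoLayerNet α a fun k => a k • e)) :
    IsBalanced a := by
  obtain ⟨z, hz, h₁, h₂⟩ := hs.exists_inner_eq_margin hy e (twoLayerNet α a fun k => a k • e)
  rw [twoLayerNet_smul_right, hz, leakyRelu_of_nonneg hα1.le hγ.le,
    leakyRelu_of_nonpos hα1.le (by linarith)] at h₁
  rw [twoLayerNet_smul_right, inner_neg_right, hz, neg_neg, leakyRelu_of_nonneg hα1.le hγ.le,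
    leakyRelu_of_nonpos hα1.le (by linarith)] at h₂
  have hPN := sum_max_zero_sq_add_sum_min_zero_sq a
  set γ := margin x y (inner ℝ e)
  set P := ∑ k, max (a k) 0 ^ 2
  set N := ∑ k, min (a k) 0 ^ 2
  have hP : (1 + α) / 4 ≤ P + α * N := le_of_mul_le_mul_right (by linarith) hγ
  have hN : (1 + α) / 4 ≤ α * P + N := le_of_mul_le_mul_right (by linarith) hγ
  constructor <;> nlinarith

end IsSymmetricDataset

theorem IsMaxMargin.twoLayerNet_eq {ι E κ : Type*} [Fintype ι] [Nonempty ι]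
    [NormedAddCommGroup E] [InnerProductSpace ℝ E] [Fintype κ] [Nontrivial κ]
    {α : ℝ} (hα : -1 < α) (hα1 : α < 1) {x : ι → E} {y : ι → ℝ} {wstar : E}
    (hw : IsMaxMargin x y wstar) (hs : IsSymmetricDataset x y) (hy : ∀ i, y i = 1 ∨ y i = -1)
    (hsep : ∃ v : E, ∀ i, 1 ≤ y i * ⟪v, x i⟫) {w : κ → E} {a : κ → ℝ}
    (hunit : ∑ k, ‖w k‖ ^ 2 + ∑ k, a k ^ 2 = 1)
    (hmax : ∀ (w' : κ → E) (a' : κ → ℝ), ∑ k, ‖w' k‖ ^ 2 + ∑ k, a' k ^ 2 = 1 →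
      margin x y (twoLayerNet α a' w') ≤ margin x y (twoLayerNet α a w)) (z : E) :
    twoLayerNet α a w z = (1 + α) / 4 * ⟪wstar, z⟫ := by
  have hγ := hw.margin_pos hsep
  obtain ⟨w', a', hunit', hf'⟩ := exists_twoLayerNet_eq_inner (κ := κ) hα1.le hw.1
  have hM := hmax w' a' hunit'
  rw [hf', margin_const_mul (by linarith)] at hM
  have hpair := hs.two_mul_margin_twoLayerNet_le hα hα1.le a w
  have hu : (2 : ℝ) • ∑ k, a k • w k = wstar := by
    refine hw.eq_of_margin_le hγ ?_ ?_
    · rw [norm_smul, Real.norm_two]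
      linarith [norm_sum_smul_le a w]
    · rw [margin_inner_smul zero_le_two]
      nlinarith
  obtain rfl : w = fun k => a k • wstar := funext <| eq_smul_of_two_mul_inner_sum_smul_eq hw.1 <| by
    rw [← real_inner_smul_left, hu, real_inner_self_eq_norm_sq, hw.1, hunit]
    norm_num
  have hsq : ∑ k, a k ^ 2 = 1 / 2 := by
    simp_rw [norm_smul, hw.1, mul_one, Real.norm_eq_abs, sq_abs] at hunit
    linarith
  exact (hs.isBalanced_of_le_margin hy hα1 hγ hsq hM).twoLayerNet_smul_right hα1.le wstar z

/-- On a linearly separable and symmetric dataset with max-margin linear separator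
`w*`, any unit-norm global maximizer `θ*` of the normalized margin of a two-layer
Leaky ReLU network of width `m ≥ 2` represents the linear function
`x ↦ ((1+α)/4)⟨w*, x⟩`. -/
theorem stmt_8 (d half m : ℕ) (hhalf : 0 < half) (hm : 2 ≤ m)
    (α : ℝ) (hα : 0 < α) (hα1 : α < 1)
    (φ : ℝ → ℝ) (hφ : ∀ z, φ z = max z (α * z))
    (x : Fin (half + half) → EuclideanSpace ℝ (Fin d))
    (y : Fin (half + half) → ℝ)
    (hy1 : ∀ i : Fin half, y (Fin.castAdd half i) = 1)
    (hy2 : ∀ i : Fin half, y (Fin.natAdd half i) = -1)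
    (hx : ∀ i : Fin half, x (Fin.natAdd half i) = - x (Fin.castAdd half i))
    (hsep : ∃ v : EuclideanSpace ℝ (Fin d), ∀ i, (1 : ℝ) ≤ y i * inner ℝ v (x i))
    (wstar : EuclideanSpace ℝ (Fin d)) (hwstar : ‖wstar‖ = 1)
    (hwstarmax : ∀ v : EuclideanSpace ℝ (Fin d), ‖v‖ = 1 →
      (Finset.univ.inf' ⟨⟨0, by omega⟩, Finset.mem_univ _⟩
          (fun i : Fin (half + half) => y i * inner ℝ v (x i))) ≤
        Finset.univ.inf' ⟨⟨0, by omega⟩, Finset.mem_univ _⟩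
          (fun i : Fin (half + half) => y i * inner ℝ wstar (x i)))
    (w : Fin m → EuclideanSpace ℝ (Fin d)) (a : Fin m → ℝ)
    (hunit : ∑ k, ‖w k‖ ^ 2 + ∑ k, (a k) ^ 2 = 1)
    (hmax : ∀ (w' : Fin m → EuclideanSpace ℝ (Fin d)) (a' : Fin m → ℝ),
      ∑ k, ‖w' k‖ ^ 2 + ∑ k, (a' k) ^ 2 = 1 →
      (Finset.univ.inf' ⟨⟨0, by omega⟩, Finset.mem_univ _⟩
          (fun i : Fin (half + half) => y i * ∑ k, a' k * φ (inner ℝ (w' k) (x i)))) ≤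
        Finset.univ.inf' ⟨⟨0, by omega⟩, Finset.mem_univ _⟩
          (fun i : Fin (half + half) => y i * ∑ k, a k * φ (inner ℝ (w k) (x i)))) :
    ∀ z : EuclideanSpace ℝ (Fin d),
      ∑ k, a k * φ (inner ℝ (w k) z) = ((1 + α) / 4) * inner ℝ wstar z := by
  obtain rfl : φ = leakyRelu α := funext hφ
  have : Nonempty (Fin (half + half)) := ⟨⟨0, by omega⟩⟩
  have : Nontrivial (Fin m) := Fin.nontrivial_iff_two_le.2 hm
  have hs : IsSymmetricDataset x y := by
    intro i
    induction i using Fin.addCases with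
    | left j => exact ⟨Fin.natAdd half j, hx j, by rw [hy1, hy2]⟩
    | right j => exact ⟨Fin.castAdd half j, by rw [hx, neg_neg], by rw [hy1, hy2, neg_neg]⟩
  have hy : ∀ i, y i = 1 ∨ y i = -1 := by
    intro i
    induction i using Fin.addCases with
    | left j => exact .inl (hy1 j)
    | right j => exact .inr (hy2 j)
  exact IsMaxMargin.twoLayerNet_eq (by linarith) hα1 ⟨hwstar, hwstarmax⟩ hs hy hsep hunit hmax
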